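/- Let e be a Dice expression (with Booleans and tuples but without function calls), and suppose the typed compilation judgment {xi : τi} ⊢ e : τ ⤳ (φ̂, γ, w) holds. Then for any values vi : τi and any value v : τ, the unnormalized semantics satisfies ⟦e[xi ↦ vi]⟧(v) = WMC(((φ̂ ⇔τ v) ∧ γ)[xi ↦τi vi], w). -/

import Mathlib

/-! The Dice language with Booleans and tuples (no function calls), its
unnormalized denotational semantics, the typed compilation to weighted Boolean
formulas, and the correctness statement relating the two via weighted model
counting. -/

/-- Dice types: `τ ::= Bool | τ1 × τ2`. -/
inductive Ty : Type
  | bool : Ty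
  | prod : Ty → Ty → Ty
deriving DecidableEq

/-- Dice values: `v ::= true | false | (v, v)`. -/
inductive Val : Type
  | bool : Bool → Val
  | pair : Val → Val → Val
deriving DecidableEq

/-- Typing of values. -/
def Val.hasTy : Val → Ty → Bool
  | .bool _, .bool => true
  | .pair v1 v2, .prod τ1 τ2 => v1.hasTy τ1 && v2.hasTy τ2
  | _, _ => false

/-- The (finitely many) values of a given type. -/
def Ty.vals : Ty → List Val
  | .bool => [.bool false, .bool true]
  | .prod τ1 τ2 => τ1.vals.flatMap (fun v1 => τ2.vals.map (fun v2 => .pair v1 v2))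

/-- Atomic expressions: variables and values. -/
inductive AExp : Type
  | var : String → AExp
  | val : Val → AExp

/-- Dice expressions:
`e ::= a | fst a | snd a | (a, a) | let x:τ = e in e | flip θ
     | if a then e else e | observe a`. -/
inductive Exp : Type
  | atom : AExp → Exp
  | fst : AExp → Exp
  | snd : AExp → Exp
  | pair : AExp → AExp → Exp
  | letin : String → Ty → Exp → Exp → Exp
  | flip : ℝ → Exp
  | ite : AExp → Exp → Exp → Exp
  | obs : AExp → Exp

/-- Substitution of values for free variables in an atomic expression. -/
def AExp.substEnv (ρ : String → Option Val) : AExp → AExp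
  | .val v => .val v
  | .var x => match ρ x with
      | some v => .val v
      | none => .var x

/-- Capture-avoiding substitution of values for free variables: `e[xi ↦ vi]`
for the substitution described by `ρ`. -/
def Exp.substEnv (ρ : String → Option Val) : Exp → Exp
  | .atom a => .atom (a.substEnv ρ)
  | .fst a => .fst (a.substEnv ρ)
  | .snd a => .snd (a.substEnv ρ)
  | .pair a1 a2 => .pair (a1.substEnv ρ) (a2.substEnv ρ)
  | .letin x τ e1 e2 =>
      .letin x τ (e1.substEnv ρ) (e2.substEnv (fun y => if y = x then none else ρ y))
  | .flip θ => .flip θ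
  | .ite a e1 e2 => .ite (a.substEnv ρ) (e1.substEnv ρ) (e2.substEnv ρ)
  | .obs a => .obs (a.substEnv ρ)

/-- Size of an expression (used for termination of the semantics). -/
def Exp.size : Exp → ℕ
  | .atom _ => 1
  | .fst _ => 1
  | .snd _ => 1
  | .pair _ _ => 1
  | .letin _ _ e1 e2 => e1.size + e2.size + 1
  | .flip _ => 1
  | .ite _ e1 e2 => e1.size + e2.size + 1
  | .obs _ => 1

theorem Exp.size_substEnv (ρ : String → Option Val) (e : Exp) :
    (e.substEnv ρ).size = e.size := by
  induction e generalizing ρ <;> simp [Exp.substEnv, Exp.size, *]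

/-- The unnormalized denotational semantics `⟦e⟧ : Val → ℝ` of a (closed) Dice
expression:
* `⟦v1⟧(v) = 1` if `v = v1` else `0`;
* `⟦fst (v1,v2)⟧(v) = 1` if `v = v1` else `0`, similarly for `snd`;
* `⟦flip θ⟧(true) = θ`, `⟦flip θ⟧(false) = 1 − θ`, `0` on other values;
* `⟦if true then e1 else e2⟧ = ⟦e1⟧`, `⟦if false then e1 else e2⟧ = ⟦e2⟧`;
* `⟦observe v1⟧(v) = 1` if `v1 = true` and `v = true`, else `0`;
* `⟦let x = e1 in e2⟧(v) = Σ_{v'} ⟦e1⟧(v') · ⟦e2[x ↦ v']⟧(v)`, summing over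
  the values `v'` of the annotated type of the bound variable.
(Expressions that still contain free variables in evaluation position get the
always-zero semantics, for totality.) -/
noncomputable def Exp.sem : Exp → Val → ℝ
  | .atom (.val v1), v => if v = v1 then 1 else 0
  | .atom (.var _), _ => 0
  | .fst (.val (.pair v1 _)), v => if v = v1 then 1 else 0
  | .fst _, _ => 0
  | .snd (.val (.pair _ v2)), v => if v = v2 then 1 else 0
  | .snd _, _ => 0
  | .pair (.val v1) (.val v2), v => if v = .pair v1 v2 then 1 else 0
  | .pair _ _, _ => 0
  | .flip θ, .bool b => if b then θ else 1 - θ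
  | .flip _, _ => 0
  | .ite (.val (.bool true)) e1 _, v => e1.sem v
  | .ite (.val (.bool false)) _ e2, v => e2.sem v
  | .ite _ _ _, _ => 0
  | .obs (.val (.bool true)), v => if v = .bool true then 1 else 0
  | .obs _, _ => 0
  | .letin x τ1 e1 e2, v =>
      (τ1.vals.map (fun v' =>
        e1.sem v' * (e2.substEnv (fun y => if y = x then some v' else none)).sem v)).sum
termination_by e _ => e.size
decreasing_by all_goals · simp [Exp.size, Exp.size_substEnv] <;> omega

/-- Propositional formulas over flip variables (numbered by `ℕ`) and program
variables (a program-variable name together with a path of left/right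
projections; `false` = left, `true` = right).  The derived names `x_l` and
`x_r` used by the form function are modeled by extending the path. -/
inductive Form : Type
  | tt : Form
  | ff : Form
  | fvar : ℕ → Form
  | pvar : String → List Bool → Form
  | not : Form → Form
  | and : Form → Form → Form
  | or : Form → Form → Form
  | iff : Form → Form → Form

/-- Evaluation of a formula under truth assignments for flip and program
variables. -/
def Form.eval (σ : ℕ → Bool) (ρ : String → List Bool → Bool) : Form → Bool
  | .tt => true
  | .ff => false
  | .fvar i => σ i
  | .pvar x p => ρ x p
  | .not φ => !(φ.eval σ ρ)
  | .and φ ψ => φ.eval σ ρ && ψ.eval σ ρ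
  | .or φ ψ => φ.eval σ ρ || ψ.eval σ ρ
  | .iff φ ψ => φ.eval σ ρ == ψ.eval σ ρ

/-- Tuples of Boolean formulas, shaped like a Dice type. -/
inductive TForm : Type
  | base : Form → TForm
  | pair : TForm → TForm → TForm

/-- The form function: `form_Bool(x) = x` and
`form_{τ1×τ2}(x) = (form_{τ1}(x_l), form_{τ2}(x_r))`, derived names being
modeled by extending the projection path. -/
def formVar (x : String) : Ty → List Bool → TForm
  | .bool, p => .base (.pvar x p)
  | .prod τ1 τ2, p =>
      .pair (formVar x τ1 (p ++ [false])) (formVar x τ2 (p ++ [true]))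

/-- A value interpreted as a (tuple of) constant Boolean formula(s). -/
def Val.toForm : Val → TForm
  | .bool b => .base (if b then .tt else .ff)
  | .pair v1 v2 => .pair v1.toForm v2.toForm

/-- Pointwise iff `φ̂1 ⇔τ φ̂2` (shape mismatch yields the false formula). -/
def TForm.tiff : TForm → TForm → Form
  | .base φ, .base ψ => .iff φ ψ
  | .pair a b, .pair c d => .and (a.tiff c) (b.tiff d)
  | _, _ => .ff

/-- Broadcasted conjunction `φ ∧τ φ̂`. -/
def TForm.band : TForm → Form → TForm
  | .base ψ, φ => .base (.and φ ψ)
  | .pair a b, φ => .pair (a.band φ) (b.band φ)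

/-- Pointwise disjunction `φ̂1 ∨τ φ̂2` (shape mismatch yields the left input). -/
def TForm.tor : TForm → TForm → TForm
  | .base a, .base b => .base (.or a b)
  | .pair a b, .pair c d => .pair (a.tor c) (b.tor d)
  | t, _ => t

/-- The component of a tuple of formulas at a given projection path. -/
def TForm.lookup : TForm → List Bool → Option Form
  | .base φ, [] => some φ
  | .pair a _, false :: p => a.lookup p
  | .pair _ b, true :: p => b.lookup p
  | _, _ => none

/-- Typed substitution `φ[x ↦τ φ̂]` on a single formula: every program
variable `(x, p)` derived from `x` is replaced by the component of the tuple
`φ̂` at path `p` (this is exactly the effect of the sequential substitutions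
`φ[x_l ↦τa φ̂a][x_r ↦τb φ̂b]` of the recursive definition). -/
def Form.tsubst : Form → String → TForm → Form
  | .tt, _, _ => .tt
  | .ff, _, _ => .ff
  | .fvar i, _, _ => .fvar i
  | .pvar y p, x, t =>
      if y = x then (t.lookup p).getD (.pvar y p) else .pvar y p
  | .not φ, x, t => .not (φ.tsubst x t)
  | .and φ ψ, x, t => .and (φ.tsubst x t) (ψ.tsubst x t)
  | .or φ ψ, x, t => .or (φ.tsubst x t) (ψ.tsubst x t)
  | .iff φ ψ, x, t => .iff (φ.tsubst x t) (ψ.tsubst x t)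

/-- Typed substitution on a tuple of formulas (componentwise). -/
def TForm.tsubst : TForm → String → TForm → TForm
  | .base φ, x, t => .base (φ.tsubst x t)
  | .pair a b, x, t => .pair (a.tsubst x t) (b.tsubst x t)

/-- Substitution `[xi ↦τi vi]` of values for all program variables of a
formula: each variable `(x, p)` is replaced by the constant component of
`(ρ x)` at path `p`. -/
def Form.substProg (ρ : String → Val) : Form → Form
  | .tt => .tt
  | .ff => .ff
  | .fvar i => .fvar i
  | .pvar x p => ((Val.toForm (ρ x)).lookup p).getD .ff
  | .not φ => .not (φ.substProg ρ)
  | .and φ ψ => .and (φ.substProg ρ) (ψ.substProg ρ)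
  | .or φ ψ => .or (φ.substProg ρ) (ψ.substProg ρ)
  | .iff φ ψ => .iff (φ.substProg ρ) (ψ.substProg ρ)

/-- Compilation of an atomic expression at a type: a variable compiles to its
form, a value to the corresponding tuple of constants. -/
def AExp.compT (Γ : String → Option Ty) : AExp → Ty → Option TForm
  | .var x, τ => if Γ x = some τ then some (formVar x τ []) else none
  | .val v, τ => if v.hasTy τ then some v.toForm else none

/-- The typed compilation judgment `Γ ⊢ e : τ ⤳ (φ̂, γ, w)`, producing a tuple
of Boolean formulas `φ̂` shaped like `τ`, an accepting formula `γ`, and a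
weight function `w`.  Freshness of flip variables is modeled by threading a
counter: `TComp Γ e τ n m φ̂ γ w` means `e` compiles using the fresh flip
variables `n, …, m−1`; the weight function is a single global function
constrained at each flip variable (the union of weight functions with disjoint
domains). -/
inductive TComp :
    (String → Option Ty) → Exp → Ty → ℕ → ℕ → TForm → Form → (ℕ → Bool → ℝ) → Prop
  | atom (Γ : String → Option Ty) (a : AExp) (τ : Ty) (t : TForm) (n : ℕ)
      (w : ℕ → Bool → ℝ) (h : a.compT Γ τ = some t) :
      TComp Γ (.atom a) τ n n t .tt w
  | fst (Γ : String → Option Ty) (a : AExp) (τ1 τ2 : Ty) (t1 t2 : TForm) (n : ℕ)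
      (w : ℕ → Bool → ℝ) (h : a.compT Γ (.prod τ1 τ2) = some (.pair t1 t2)) :
      TComp Γ (.fst a) τ1 n n t1 .tt w
  | snd (Γ : String → Option Ty) (a : AExp) (τ1 τ2 : Ty) (t1 t2 : TForm) (n : ℕ)
      (w : ℕ → Bool → ℝ) (h : a.compT Γ (.prod τ1 τ2) = some (.pair t1 t2)) :
      TComp Γ (.snd a) τ2 n n t2 .tt w
  | pair (Γ : String → Option Ty) (a1 a2 : AExp) (τ1 τ2 : Ty) (t1 t2 : TForm)
      (n : ℕ) (w : ℕ → Bool → ℝ)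
      (h1 : a1.compT Γ τ1 = some t1) (h2 : a2.compT Γ τ2 = some t2) :
      TComp Γ (.pair a1 a2) (.prod τ1 τ2) n n (.pair t1 t2) .tt w
  | flip (Γ : String → Option Ty) (θ : ℝ) (n : ℕ) (w : ℕ → Bool → ℝ)
      (h0 : 0 ≤ θ) (h1 : θ ≤ 1) (hwt : w n true = θ) (hwf : w n false = 1 - θ) :
      TComp Γ (.flip θ) .bool n (n + 1) (.base (.fvar n)) .tt w
  | obs (Γ : String → Option Ty) (a : AExp) (φa : Form) (n : ℕ)
      (w : ℕ → Bool → ℝ) (h : a.compT Γ .bool = some (.base φa)) :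
      TComp Γ (.obs a) .bool n n (.base .tt) φa w
  | ite (Γ : String → Option Ty) (a : AExp) (eT eE : Exp) (τ : Ty)
      (φg : Form) (tT tE : TForm) (γT γE : Form) (n m k : ℕ) (w : ℕ → Bool → ℝ)
      (hg : a.compT Γ .bool = some (.base φg))
      (hT : TComp Γ eT τ n m tT γT w) (hE : TComp Γ eE τ m k tE γE w) :
      TComp Γ (.ite a eT eE) τ n k
        ((tT.band φg).tor (tE.band (.not φg)))
        (.or (.and φg γT) (.and (.not φg) γE)) w
  | letin (Γ : String → Option Ty) (x : String) (τ1 τ2 : Ty) (e1 e2 : Exp)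
      (t1 t2 : TForm) (γ1 γ2 : Form) (n m k : ℕ) (w : ℕ → Bool → ℝ)
      (h1 : TComp Γ e1 τ1 n m t1 γ1 w)
      (h2 : TComp (fun y => if y = x then some τ1 else Γ y) e2 τ2 m k t2 γ2 w) :
      TComp Γ (.letin x τ1 e1 e2) τ2 n k
        (t2.tsubst x t1) (.and γ1 (γ2.tsubst x t1)) w

/-- The weighted model count of a formula over the flip variables `0, …, n−1`:
`WMC(φ, w) = Σ_{ω ⊨ φ} Π_{l ∈ ω} w(l)`.  (Program variables, which do not
occur after substitution, are evaluated as `false`.) -/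
noncomputable def WMC (n : ℕ) (φ : Form) (w : ℕ → Bool → ℝ) : ℝ :=
  ∑ σ : Fin n → Bool,
    if φ.eval (fun i => if h : i < n then σ ⟨i, h⟩ else false) (fun _ _ => false)
    then ∏ i : Fin n, w i (σ i) else 0

/-!
A tuple of formulas `t` denotes, under program values `ρ` and an assignment `σ` of the flip
variables, the value `t.read ρ σ`. In these terms `φ̂ ⇔τ v` says that `φ̂` reads back as `v`,
and the typed substitution `φ[x ↦τ φ̂]` amounts to binding `x` to the value read back from `φ̂`;
this uses that every program variable occurring in the compiled formulas is a Boolean leaf of a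
variable in scope. The weighted model count is an iterated weighted sum over the flip variables.
Each subderivation allocates a fresh block of flip variables, its formulas depend only on the
variables allocated so far, and the weights of every flip variable sum to one. Hence for
`let x = e1 in e2` the sum over both blocks factors as the sum over the block of `e1`, where the
read-back of `e1` picks the value `v'` of `x`, times the sum for `e2[x ↦ v']`; and for an `if`
the block of the branch that is not taken sums out to one.
-/

open Function

/-- Sum over all ways of overwriting `σ` on the variables of `l`, each choice weighted by `w`. -/
noncomputable def weightedSum (w : ℕ → Bool → ℝ) :
    List ℕ → (ℕ → Bool) → ((ℕ → Bool) → ℝ) → ℝ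
  | [], σ, f => f σ
  | i :: l, σ, f => ∑ b : Bool, w i b * weightedSum w l (update σ i b) f

section WeightedSum

variable (w : ℕ → Bool → ℝ)

theorem weightedSum_append (l₁ l₂ : List ℕ) (σ : ℕ → Bool) (f : (ℕ → Bool) → ℝ) :
    weightedSum w (l₁ ++ l₂) σ f = weightedSum w l₁ σ (fun σ₁ => weightedSum w l₂ σ₁ f) := by
  induction l₁ generalizing σ with
  | nil => rfl
  | cons i l₁ ih => simp only [List.cons_append, weightedSum, ih]

theorem weightedSum_mul_const (l : List ℕ) (σ : ℕ → Bool) (f : (ℕ → Bool) → ℝ) (c : ℝ) :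
    weightedSum w l σ (fun τ => f τ * c) = weightedSum w l σ f * c := by
  induction l generalizing σ with
  | nil => rfl
  | cons i l ih => simp only [weightedSum, ih, Finset.sum_mul, mul_assoc]

theorem weightedSum_sum {ι : Type*} (s : Finset ι) (l : List ℕ) (σ : ℕ → Bool)
    (f : ι → (ℕ → Bool) → ℝ) :
    weightedSum w l σ (fun τ => ∑ a ∈ s, f a τ) = ∑ a ∈ s, weightedSum w l σ (f a) := by
  induction l generalizing σ with
  | nil => rfl
  | cons i l ih => simp only [weightedSum, ih, Finset.mul_sum]; exact Finset.sum_comm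

theorem weightedSum_const {l : List ℕ} (hw : ∀ i ∈ l, w i true + w i false = 1)
    (σ : ℕ → Bool) (c : ℝ) : weightedSum w l σ (fun _ => c) = c := by
  induction l generalizing σ with
  | nil => rfl
  | cons i l ih =>
    simp only [weightedSum, ih fun j hj => hw j (List.mem_cons_of_mem i hj), Fintype.sum_bool,
      ← add_mul, hw i List.mem_cons_self, one_mul]

theorem weightedSum_mul_of_dependsOn {l : List ℕ} {s : Set ℕ} {c : (ℕ → Bool) → ℝ}
    (hc : DependsOn c s) (hl : ∀ i ∈ l, i ∉ s) (σ : ℕ → Bool) (f : (ℕ → Bool) → ℝ) :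
    weightedSum w l σ (fun τ => c τ * f τ) = c σ * weightedSum w l σ f := by
  induction l generalizing σ with
  | nil => rfl
  | cons i l ih =>
    have hci : ∀ b, c (update σ i b) = c σ := fun b =>
      hc fun j hj => update_of_ne (by rintro rfl; exact hl j List.mem_cons_self hj) _ _
    simp only [weightedSum, ih (fun j hj => hl j (List.mem_cons_of_mem i hj)), hci,
      Finset.mul_sum, mul_left_comm]

theorem sum_fin_eq_weightedSum (n : ℕ) (f : (ℕ → Bool) → ℝ) :
    ∑ σ : Fin n → Bool,
        (∏ i : Fin n, w i (σ i)) * f (fun i => if h : i < n then σ ⟨i, h⟩ else false)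
      = weightedSum w (List.Ico 0 n) (fun _ => false) f := by
  induction n generalizing f with
  | zero => simp [weightedSum]
  | succ n ih =>
    have hsnoc : ∀ (σ : Fin n → Bool) (b : Bool),
        (fun i => if h : i < n + 1 then (Fin.snoc σ b : Fin (n + 1) → Bool) ⟨i, h⟩ else false)
          = update (fun i => if h : i < n then σ ⟨i, h⟩ else false) n b := by
      intro σ b
      funext i
      rcases lt_trichotomy i n with hi | rfl | hi
      · simp [hi, hi.ne, Nat.lt_succ_of_lt hi, Fin.snoc, Fin.castLT]
      · simp [Fin.snoc]
      · simp [hi.ne', show ¬ i < n + 1 by omega, show ¬ i < n by omega]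
    rw [List.Ico.succ_top (Nat.zero_le n), weightedSum_append, ← ih,
      ← (Fin.snocEquiv fun _ => Bool).sum_comp, Fintype.sum_prod_type, Finset.sum_comm]
    refine Finset.sum_congr rfl fun σ _ => ?_
    simp only [weightedSum, Fin.snocEquiv_apply, Fin.prod_univ_castSucc, Fin.snoc_castSucc,
      Fin.snoc_last, hsnoc, Finset.mul_sum, Fin.val_last, Fin.val_castSucc, mul_assoc]

theorem weightedSum_Ico_mul {n m k : ℕ} (hnm : n ≤ m) (hmk : m ≤ k) {f : (ℕ → Bool) → ℝ}
    (hf : DependsOn f (Set.Iio m)) {g : (ℕ → Bool) → ℝ} {c : ℝ}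
    (hg : ∀ σ, weightedSum w (List.Ico m k) σ g = c) (σ₀ : ℕ → Bool) :
    weightedSum w (List.Ico n k) σ₀ (fun σ => f σ * g σ)
      = weightedSum w (List.Ico n m) σ₀ f * c := by
  rw [← List.Ico.append_consecutive hnm hmk, weightedSum_append, ← weightedSum_mul_const]
  congr 1
  funext σ₁
  rw [weightedSum_mul_of_dependsOn w hf (fun _ hi => not_lt.2 (List.Ico.mem.1 hi).1), hg]

end WeightedSum

def Form.evalIn (φ : Form) (ρ : String → Val) (σ : ℕ → Bool) : Bool :=
  (φ.substProg ρ).eval σ (fun _ _ => false)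

def TForm.read : TForm → (String → Val) → (ℕ → Bool) → Val
  | .base φ, ρ, σ => .bool (φ.evalIn ρ σ)
  | .pair a b, ρ, σ => .pair (a.read ρ σ) (b.read ρ σ)

def TForm.Shaped : TForm → Ty → Prop
  | .base _, .bool => True
  | .pair a b, .prod τ₁ τ₂ => a.Shaped τ₁ ∧ b.Shaped τ₂
  | _, _ => False

def Ty.IsLeafPath : Ty → List Bool → Prop
  | .bool, [] => True
  | .prod τ₁ _, false :: p => τ₁.IsLeafPath p
  | .prod _ τ₂, true :: p => τ₂.IsLeafPath p
  | _, _ => False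

def Form.WellScoped (Γ : String → Option Ty) : Form → Prop
  | .tt | .ff | .fvar _ => True
  | .pvar x p => ∃ τ, Γ x = some τ ∧ τ.IsLeafPath p
  | .not φ => φ.WellScoped Γ
  | .and φ ψ | .or φ ψ | .iff φ ψ => φ.WellScoped Γ ∧ ψ.WellScoped Γ

def TForm.WellScoped (Γ : String → Option Ty) : TForm → Prop
  | .base φ => φ.WellScoped Γ
  | .pair a b => a.WellScoped Γ ∧ b.WellScoped Γ

section ReadBack

variable (ρ : String → Val) (σ : ℕ → Bool)

@[simp] theorem Form.evalIn_tt : Form.tt.evalIn ρ σ = true := rfl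

@[simp] theorem Form.evalIn_fvar (i : ℕ) : (Form.fvar i).evalIn ρ σ = σ i := rfl

@[simp] theorem Form.evalIn_not (φ : Form) : φ.not.evalIn ρ σ = !φ.evalIn ρ σ := rfl

@[simp] theorem Form.evalIn_and (φ ψ : Form) :
    (φ.and ψ).evalIn ρ σ = (φ.evalIn ρ σ && ψ.evalIn ρ σ) := rfl

@[simp] theorem Form.evalIn_or (φ ψ : Form) :
    (φ.or ψ).evalIn ρ σ = (φ.evalIn ρ σ || ψ.evalIn ρ σ) := rfl

theorem Form.eval_ite_tt_ff (b : Bool) (π : String → List Bool → Bool) :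
    (if b then Form.tt else Form.ff).eval σ π = b := by
  cases b <;> rfl

theorem Val.read_toForm (v : Val) : v.toForm.read ρ σ = v := by
  induction v with
  | bool b => cases b <;> rfl
  | pair v₁ v₂ ih₁ ih₂ => simp only [Val.toForm, TForm.read, ih₁, ih₂]

theorem TForm.read_hasTy {t : TForm} {τ : Ty} (ht : t.Shaped τ) : (t.read ρ σ).hasTy τ := by
  induction t generalizing τ with
  | base φ => cases τ <;> simp_all [TForm.Shaped, TForm.read, Val.hasTy]
  | pair a b iha ihb =>
    cases τ <;> simp_all [TForm.Shaped, TForm.read, Val.hasTy]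

theorem TForm.read_toForm_lookup {t : TForm} {p : List Bool} {φ : Form} (h : t.lookup p = some φ) :
    (t.read ρ σ).toForm.lookup p = some (if φ.evalIn ρ σ then .tt else .ff) := by
  induction t generalizing p with
  | base ψ => cases p <;> simp_all [TForm.lookup, TForm.read, Val.toForm]
  | pair a b iha ihb =>
    rcases p with _ | ⟨_ | _, p⟩ <;> simp_all [TForm.lookup, TForm.read, Val.toForm]

theorem TForm.exists_lookup {t : TForm} {τ : Ty} {p : List Bool} (ht : t.Shaped τ)
    (hp : τ.IsLeafPath p) : ∃ φ, t.lookup p = some φ := by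
  induction τ generalizing t p with
  | bool =>
    rcases t with φ | _ <;> rcases p with _ | _ <;>
      simp_all [TForm.lookup, Ty.IsLeafPath, TForm.Shaped]
  | prod τ₁ τ₂ ih₁ ih₂ =>
    rcases t with _ | ⟨a, b⟩
    · simp [TForm.Shaped] at ht
    rcases p with _ | ⟨_ | _, p⟩
    · simp [Ty.IsLeafPath] at hp
    · exact ih₁ (t := a) ht.1 hp
    · exact ih₂ (t := b) ht.2 hp

theorem TForm.evalIn_tiff {t : TForm} {τ : Ty} {v : Val} (ht : t.Shaped τ) (hv : v.hasTy τ) :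
    (t.tiff v.toForm).evalIn ρ σ = decide (t.read ρ σ = v) := by
  induction τ generalizing t v with
  | bool =>
    rcases t with φ | _ <;> rcases v with b | _ <;>
      simp_all [TForm.Shaped, Val.hasTy, TForm.tiff, Val.toForm, TForm.read, Form.evalIn,
        Form.substProg]
    cases b <;> simp [Form.substProg, Form.eval]
  | prod τ₁ τ₂ ih₁ ih₂ =>
    rcases t with _ | ⟨a, b⟩ <;> rcases v with _ | ⟨v₁, v₂⟩ <;>
      simp_all [TForm.Shaped, Val.hasTy]
    simp only [TForm.tiff, Val.toForm, Form.evalIn, Form.substProg, Form.eval] at ih₁ ih₂ ⊢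
    simp [ih₁ ht.1 hv.1, ih₂ ht.2 hv.2, TForm.read]

theorem TForm.read_band_tor {tT tE : TForm} {τ : Ty} (hT : tT.Shaped τ) (hE : tE.Shaped τ)
    (φ : Form) :
    ((tT.band φ).tor (tE.band φ.not)).read ρ σ
      = if φ.evalIn ρ σ then tT.read ρ σ else tE.read ρ σ := by
  induction τ generalizing tT tE with
  | bool =>
    rcases tT with _ | _ <;> rcases tE with _ | _ <;> simp_all [TForm.Shaped]
    cases h : φ.evalIn ρ σ <;>
      simp_all [TForm.band, TForm.tor, TForm.read, Form.evalIn, Form.substProg, Form.eval]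
  | prod τ₁ τ₂ ih₁ ih₂ =>
    rcases tT with _ | _ <;> rcases tE with _ | _ <;> simp_all [TForm.Shaped]
    simp only [TForm.band, TForm.tor, TForm.read, ih₁ hT.1 hE.1, ih₂ hT.2 hE.2]
    split <;> rfl

theorem TForm.read_formVar (x : String) {τ : Ty} {p : List Bool} {u : Val} (hu : u.hasTy τ)
    (hp : ∀ q, (ρ x).toForm.lookup (p ++ q) = u.toForm.lookup q) :
    (formVar x τ p).read ρ σ = u := by
  induction τ generalizing p u with
  | bool =>
    rcases u with b | _
    · have := hp []
      simp only [List.append_nil, Val.toForm, TForm.lookup] at this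
      simp [formVar, TForm.read, Form.evalIn, Form.substProg, this, Form.eval_ite_tt_ff]
    · simp [Val.hasTy] at hu
  | prod τ₁ τ₂ ih₁ ih₂ =>
    rcases u with _ | ⟨u₁, u₂⟩
    · simp [Val.hasTy] at hu
    simp only [Val.hasTy, Bool.and_eq_true] at hu
    simp only [formVar, TForm.read]
    rw [ih₁ hu.1 fun q => by simpa [Val.toForm, TForm.lookup] using hp (false :: q),
      ih₂ hu.2 fun q => by simpa [Val.toForm, TForm.lookup] using hp (true :: q)]

end ReadBack

section Substitution

variable {Γ : String → Option Ty}

theorem Val.shaped_toForm {v : Val} {τ : Ty} (hv : v.hasTy τ) : v.toForm.Shaped τ := by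
  induction v generalizing τ with
  | bool b => cases τ <;> simp_all [Val.hasTy, Val.toForm, TForm.Shaped]
  | pair v₁ v₂ ih₁ ih₂ =>
    cases τ <;> simp_all [Val.hasTy, Val.toForm, TForm.Shaped]

theorem Val.wellScoped_toForm (v : Val) : v.toForm.WellScoped Γ := by
  induction v with
  | bool b => cases b <;> trivial
  | pair v₁ v₂ ih₁ ih₂ => exact ⟨ih₁, ih₂⟩

theorem shaped_formVar (x : String) (τ : Ty) (p : List Bool) : (formVar x τ p).Shaped τ := by
  induction τ generalizing p with
  | bool => trivial
  | prod τ₁ τ₂ ih₁ ih₂ => exact ⟨ih₁ _, ih₂ _⟩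

theorem wellScoped_formVar {x : String} {τ₀ : Ty} (hx : Γ x = some τ₀) {τ : Ty} {p : List Bool}
    (hp : ∀ q, τ.IsLeafPath q → τ₀.IsLeafPath (p ++ q)) : (formVar x τ p).WellScoped Γ := by
  induction τ generalizing p with
  | bool => exact ⟨τ₀, hx, by simpa using hp [] trivial⟩
  | prod τ₁ τ₂ ih₁ ih₂ =>
    exact ⟨ih₁ fun q hq => by simpa using hp (false :: q) hq,
      ih₂ fun q hq => by simpa using hp (true :: q) hq⟩

theorem TForm.Shaped.band {t : TForm} {τ : Ty} (ht : t.Shaped τ) (φ : Form) :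
    (t.band φ).Shaped τ := by
  induction t generalizing τ with
  | base ψ => cases τ <;> simp_all [TForm.band, TForm.Shaped]
  | pair a b iha ihb => cases τ <;> simp_all [TForm.band, TForm.Shaped]

theorem TForm.Shaped.tor {t s : TForm} {τ : Ty} (ht : t.Shaped τ) (hs : s.Shaped τ) :
    (t.tor s).Shaped τ := by
  induction t generalizing s τ with
  | base ψ => cases τ <;> cases s <;> simp_all [TForm.tor, TForm.Shaped]
  | pair a b iha ihb => cases τ <;> cases s <;> simp_all [TForm.tor, TForm.Shaped]

theorem TForm.Shaped.tsubst {t : TForm} {τ : Ty} (ht : t.Shaped τ) (x : String) (s : TForm) :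
    (t.tsubst x s).Shaped τ := by
  induction t generalizing τ with
  | base ψ => cases τ <;> simp_all [TForm.tsubst, TForm.Shaped]
  | pair a b iha ihb => cases τ <;> simp_all [TForm.tsubst, TForm.Shaped]

theorem TForm.WellScoped.lookup {t : TForm} {p : List Bool} {φ : Form} (ht : t.WellScoped Γ)
    (h : t.lookup p = some φ) : φ.WellScoped Γ := by
  induction t generalizing p with
  | base ψ => cases p <;> simp_all [TForm.lookup, TForm.WellScoped]
  | pair a b iha ihb =>
    rcases p with _ | ⟨_ | _, p⟩
    · simp [TForm.lookup] at h
    · exact iha ht.1 h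
    · exact ihb ht.2 h

theorem TForm.WellScoped.band {t : TForm} {φ : Form} (ht : t.WellScoped Γ)
    (hφ : φ.WellScoped Γ) : (t.band φ).WellScoped Γ := by
  induction t with
  | base ψ => exact ⟨hφ, ht⟩
  | pair a b iha ihb => exact ⟨iha ht.1, ihb ht.2⟩

theorem TForm.WellScoped.tor {t s : TForm} (ht : t.WellScoped Γ) (hs : s.WellScoped Γ) :
    (t.tor s).WellScoped Γ := by
  induction t generalizing s with
  | base ψ => cases s <;> simp_all [TForm.tor, TForm.WellScoped, Form.WellScoped]
  | pair a b iha ihb => cases s <;> simp_all [TForm.tor, TForm.WellScoped]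

variable {x : String} {τ : Ty} {t : TForm}

theorem Form.WellScoped.tsubst {φ : Form}
    (hφ : φ.WellScoped (fun y => if y = x then some τ else Γ y))
    (hts : t.Shaped τ) (ht : t.WellScoped Γ) : (φ.tsubst x t).WellScoped Γ := by
  induction φ with
  | pvar y p =>
    obtain ⟨τ', hy, hp⟩ := hφ
    by_cases hyx : y = x
    · subst hyx
      obtain rfl : τ = τ' := by simpa using hy
      obtain ⟨φ, hφ⟩ := TForm.exists_lookup hts hp
      simpa [Form.tsubst, hφ] using ht.lookup hφ
    · simp only [Form.tsubst, if_neg hyx]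
      exact ⟨τ', by simpa [hyx] using hy, hp⟩
  | _ => simp_all [Form.WellScoped, Form.tsubst]

theorem TForm.WellScoped.tsubst {s : TForm}
    (hs : s.WellScoped (fun y => if y = x then some τ else Γ y))
    (hts : t.Shaped τ) (ht : t.WellScoped Γ) : (s.tsubst x t).WellScoped Γ := by
  induction s with
  | base ψ => exact Form.WellScoped.tsubst hs hts ht
  | pair a b iha ihb => exact ⟨iha hs.1, ihb hs.2⟩

variable (ρ : String → Val) (σ : ℕ → Bool)

theorem Form.evalIn_tsubst {φ : Form}
    (hφ : φ.WellScoped (fun y => if y = x then some τ else Γ y)) (hts : t.Shaped τ) :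
    (φ.tsubst x t).evalIn ρ σ = φ.evalIn (update ρ x (t.read ρ σ)) σ := by
  induction φ with
  | pvar y p =>
    obtain ⟨τ', hy, hp⟩ := hφ
    by_cases hyx : y = x
    · subst hyx
      obtain rfl : τ = τ' := by simpa using hy
      obtain ⟨φ, hφ⟩ := TForm.exists_lookup hts hp
      have hsubst : (Form.pvar y p).substProg (update ρ y (t.read ρ σ))
          = if φ.evalIn ρ σ then .tt else .ff := by
        simp [Form.substProg, TForm.read_toForm_lookup ρ σ hφ]
      simp only [Form.tsubst, if_pos, hφ, Option.getD_some]
      rw [Form.evalIn.eq_def (Form.pvar y p), hsubst, Form.eval_ite_tt_ff]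
    · simp [Form.tsubst, hyx, Form.evalIn, Form.substProg]
  | _ => simp_all [Form.WellScoped, Form.tsubst, Form.evalIn, Form.substProg, Form.eval]

theorem TForm.read_tsubst {s : TForm}
    (hs : s.WellScoped (fun y => if y = x then some τ else Γ y)) (hts : t.Shaped τ) :
    (s.tsubst x t).read ρ σ = s.read (update ρ x (t.read ρ σ)) σ := by
  induction s with
  | base ψ => simp only [TForm.tsubst, TForm.read, Form.evalIn_tsubst ρ σ hs hts]
  | pair a b iha ihb => simp only [TForm.tsubst, TForm.read, iha hs.1, ihb hs.2]

end Substitution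

theorem Ty.mem_vals {τ : Ty} {v : Val} : v ∈ τ.vals ↔ v.hasTy τ := by
  induction τ generalizing v with
  | bool => rcases v with ⟨_ | _⟩ | _ <;> simp [Ty.vals, Val.hasTy]
  | prod τ₁ τ₂ ih₁ ih₂ =>
    rcases v with _ | ⟨v₁, v₂⟩ <;> simp [Ty.vals, Val.hasTy, ih₁, ih₂]

theorem Ty.nodup_vals (τ : Ty) : τ.vals.Nodup := by
  induction τ with
  | bool => simp [Ty.vals]
  | prod τ₁ τ₂ ih₁ ih₂ =>
    refine List.nodup_flatMap.2 ⟨fun v₁ _ => ih₂.map fun _ _ h => by injection h, ?_⟩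
    refine ih₁.pairwise_of_forall_ne fun v₁ _ v₁' _ hne => ?_
    simp only [Function.onFun, List.disjoint_left, List.mem_map]
    rintro _ ⟨u, _, rfl⟩ ⟨u', _, h⟩
    injection h with h
    exact hne h.symm

def EnvHasTy (ρ : String → Val) (Γ : String → Option Ty) : Prop :=
  ∀ x τ, Γ x = some τ → (ρ x).hasTy τ

theorem EnvHasTy.update {ρ : String → Val} {Γ : String → Option Ty} (hρ : EnvHasTy ρ Γ)
    {x : String} {τ : Ty} {v : Val} (hv : v.hasTy τ) :
    EnvHasTy (update ρ x v) (fun y => if y = x then some τ else Γ y) := by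
  intro y τ' hy
  by_cases hyx : y = x
  · subst hyx
    obtain rfl : τ = τ' := by simpa using hy
    simpa using hv
  · simp only [hyx, if_false] at hy
    simpa [hyx] using hρ y τ' hy

def AExp.valIn (ρ : String → Val) : AExp → Val
  | .var x => ρ x
  | .val v => v

theorem AExp.substEnv_some (ρ : String → Val) (a : AExp) :
    a.substEnv (fun x => some (ρ x)) = .val (a.valIn ρ) := by
  cases a <;> rfl

section Atoms

variable {Γ : String → Option Ty} {a : AExp} {τ : Ty} {t : TForm}

theorem AExp.shaped_of_compT (h : a.compT Γ τ = some t) : t.Shaped τ := by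
  cases a <;> simp only [AExp.compT, Option.ite_none_right_eq_some, Option.some.injEq] at h
  · exact h.2 ▸ shaped_formVar _ _ _
  · exact h.2 ▸ Val.shaped_toForm h.1

theorem AExp.wellScoped_of_compT (h : a.compT Γ τ = some t) : t.WellScoped Γ := by
  cases a <;> simp only [AExp.compT, Option.ite_none_right_eq_some, Option.some.injEq] at h
  · exact h.2 ▸ wellScoped_formVar h.1 fun _ hq => hq
  · exact h.2 ▸ Val.wellScoped_toForm _

theorem AExp.read_of_compT (h : a.compT Γ τ = some t) {ρ : String → Val} (hρ : EnvHasTy ρ Γ)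
    (σ : ℕ → Bool) : t.read ρ σ = a.valIn ρ := by
  cases a <;> simp only [AExp.compT, Option.ite_none_right_eq_some, Option.some.injEq] at h
  · obtain ⟨hx, rfl⟩ := h
    exact TForm.read_formVar ρ σ _ (hρ _ τ hx) fun _ => rfl
  · obtain ⟨-, rfl⟩ := h
    exact Val.read_toForm ρ σ _

theorem AExp.read_eq_read_of_compT (h : a.compT Γ τ = some t) {ρ : String → Val}
    (hρ : EnvHasTy ρ Γ) (σ σ' : ℕ → Bool) : t.read ρ σ = t.read ρ σ' :=
  (AExp.read_of_compT h hρ σ).trans (AExp.read_of_compT h hρ σ').symm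

theorem AExp.evalIn_eq_evalIn_of_compT {φ : Form} (h : a.compT Γ .bool = some (.base φ))
    {ρ : String → Val} (hρ : EnvHasTy ρ Γ) (σ σ' : ℕ → Bool) : φ.evalIn ρ σ = φ.evalIn ρ σ' := by
  simpa [TForm.read] using AExp.read_eq_read_of_compT h hρ σ σ'

end Atoms

noncomputable def TForm.indicator (t : TForm) (γ : Form) (ρ : String → Val) (v : Val)
    (σ : ℕ → Bool) : ℝ :=
  if t.read ρ σ = v ∧ γ.evalIn ρ σ = true then 1 else 0

section Indicator

variable (ρ : String → Val) (v : Val) (σ : ℕ → Bool)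

theorem TForm.indicator_eq {t : TForm} {τ : Ty} (ht : t.Shaped τ) (hv : v.hasTy τ) (γ : Form) :
    t.indicator γ ρ v σ = if ((t.tiff v.toForm).and γ).evalIn ρ σ then 1 else 0 := by
  simp [TForm.indicator, TForm.evalIn_tiff ρ σ ht hv]

theorem TForm.indicator_ite {tT tE : TForm} {τ : Ty} (hT : tT.Shaped τ) (hE : tE.Shaped τ)
    {φ : Form} {b : Bool} (hφ : ∀ σ, φ.evalIn ρ σ = b) (γT γE : Form) :
    ((tT.band φ).tor (tE.band φ.not)).indicator ((φ.and γT).or (φ.not.and γE)) ρ v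
      = if b then tT.indicator γT ρ v else tE.indicator γE ρ v := by
  funext σ
  rw [TForm.indicator, TForm.read_band_tor ρ σ hT hE]
  cases b <;> simp [TForm.indicator, hφ σ]

/-- Only the value `v'` that `t₁` actually reads back as contributes to the sum. -/
theorem TForm.indicator_tsubst {Γ : String → Option Ty} {x : String} {τ₁ : Ty}
    {t₁ t₂ : TForm} {γ₁ γ₂ : Form} (ht₁ : t₁.Shaped τ₁)
    (ht₂ : t₂.WellScoped (fun y => if y = x then some τ₁ else Γ y))
    (hγ₂ : γ₂.WellScoped (fun y => if y = x then some τ₁ else Γ y)) :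
    (t₂.tsubst x t₁).indicator (γ₁.and (γ₂.tsubst x t₁)) ρ v σ
      = ∑ v' ∈ τ₁.vals.toFinset,
          t₁.indicator γ₁ ρ v' σ * t₂.indicator γ₂ (update ρ x v') v σ := by
  have hr : t₁.read ρ σ ∈ τ₁.vals.toFinset :=
    List.mem_toFinset.2 (Ty.mem_vals.2 (t₁.read_hasTy ρ σ ht₁))
  rw [Finset.sum_eq_single_of_mem _ hr fun v' _ hne => by simp [TForm.indicator, Ne.symm hne]]
  simp only [TForm.indicator, TForm.read_tsubst ρ σ ht₂ ht₁, Form.evalIn_and,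
    Form.evalIn_tsubst ρ σ hγ₂ ht₁, Bool.and_eq_true]
  split_ifs <;> simp_all

end Indicator

section Invariants

variable {Γ : String → Option Ty} {e : Exp} {τ : Ty} {n m : ℕ} {t : TForm} {γ : Form}
  {w : ℕ → Bool → ℝ}

theorem TComp.le (h : TComp Γ e τ n m t γ w) : n ≤ m := by
  induction h <;> omega

theorem TComp.shaped (h : TComp Γ e τ n m t γ w) : t.Shaped τ := by
  induction h with
  | atom _ _ _ _ _ _ hc => exact AExp.shaped_of_compT hc
  | fst _ _ _ _ _ _ _ _ hc => exact (AExp.shaped_of_compT hc).1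
  | snd _ _ _ _ _ _ _ _ hc => exact (AExp.shaped_of_compT hc).2
  | pair _ _ _ _ _ _ _ _ _ h₁ h₂ => exact ⟨AExp.shaped_of_compT h₁, AExp.shaped_of_compT h₂⟩
  | flip | obs => trivial
  | ite _ _ _ _ _ φ _ _ _ _ _ _ _ _ _ _ _ ihT ihE => exact (ihT.band φ).tor (ihE.band φ.not)
  | letin _ x _ _ _ _ t₁ _ _ _ _ _ _ _ _ _ _ ih₂ => exact ih₂.tsubst x t₁

theorem TComp.wellScoped (h : TComp Γ e τ n m t γ w) : t.WellScoped Γ ∧ γ.WellScoped Γ := by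
  induction h with
  | atom _ _ _ _ _ _ hc => exact ⟨AExp.wellScoped_of_compT hc, trivial⟩
  | fst _ _ _ _ _ _ _ _ hc => exact ⟨(AExp.wellScoped_of_compT hc).1, trivial⟩
  | snd _ _ _ _ _ _ _ _ hc => exact ⟨(AExp.wellScoped_of_compT hc).2, trivial⟩
  | pair _ _ _ _ _ _ _ _ _ h₁ h₂ =>
    exact ⟨⟨AExp.wellScoped_of_compT h₁, AExp.wellScoped_of_compT h₂⟩, trivial⟩
  | flip => exact ⟨trivial, trivial⟩
  | obs _ _ _ _ _ hc => exact ⟨trivial, AExp.wellScoped_of_compT hc⟩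
  | ite _ _ _ _ _ _ _ _ _ _ _ _ _ _ hg _ _ ihT ihE =>
    have hφ := AExp.wellScoped_of_compT hg
    exact ⟨(ihT.1.band hφ).tor (ihE.1.band hφ), ⟨hφ, ihT.2⟩, ⟨hφ, ihE.2⟩⟩
  | letin _ _ _ _ _ _ _ _ _ _ _ _ _ _ h₁ _ ih₁ ih₂ =>
    exact ⟨ih₂.1.tsubst h₁.shaped ih₁.1, ih₁.2, ih₂.2.tsubst h₁.shaped ih₁.1⟩

theorem TComp.weights_sum_one (h : TComp Γ e τ n m t γ w) :
    ∀ i ∈ List.Ico n m, w i true + w i false = 1 := by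
  induction h with
  | flip _ _ _ _ _ _ hwt hwf =>
    intro i hi
    rw [List.Ico.succ_singleton, List.mem_singleton] at hi
    subst hi
    rw [hwt, hwf]
    ring
  | ite _ _ _ _ _ _ _ _ _ _ _ _ _ _ _ hT hE ihT ihE =>
    intro i hi
    rw [← List.Ico.append_consecutive hT.le hE.le, List.mem_append] at hi
    exact hi.elim (ihT i) (ihE i)
  | letin _ _ _ _ _ _ _ _ _ _ _ _ _ _ h₁ h₂ ih₁ ih₂ =>
    intro i hi
    rw [← List.Ico.append_consecutive h₁.le h₂.le, List.mem_append] at hi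
    exact hi.elim (ih₁ i) (ih₂ i)
  | _ => simp

theorem TComp.dependsOn (h : TComp Γ e τ n m t γ w) {ρ : String → Val} (hρ : EnvHasTy ρ Γ) :
    DependsOn (t.read ρ) (Set.Iio m) ∧ DependsOn (γ.evalIn ρ) (Set.Iio m) := by
  induction h generalizing ρ with
  | atom _ _ _ _ _ _ hc =>
    exact ⟨fun σ σ' _ => AExp.read_eq_read_of_compT hc hρ σ σ', fun _ _ _ => rfl⟩
  | fst _ _ _ _ _ _ _ _ hc | snd _ _ _ _ _ _ _ _ hc =>
    refine ⟨fun σ σ' _ => ?_, fun _ _ _ => rfl⟩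
    have := AExp.read_eq_read_of_compT hc hρ σ σ'
    simp only [TForm.read, Val.pair.injEq] at this
    first | exact this.1 | exact this.2
  | pair _ _ _ _ _ _ _ _ _ h₁ h₂ =>
    refine ⟨fun σ σ' _ => ?_, fun _ _ _ => rfl⟩
    simp only [TForm.read, AExp.read_of_compT h₁ hρ, AExp.read_of_compT h₂ hρ]
  | flip =>
    exact ⟨fun σ σ' hσ => by simp [TForm.read, hσ _ (Nat.lt_succ_self _)], fun _ _ _ => rfl⟩
  | obs _ _ _ _ _ hc =>
    exact ⟨fun _ _ _ => rfl, fun σ σ' _ => AExp.evalIn_eq_evalIn_of_compT hc hρ σ σ'⟩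
  | ite _ _ _ _ _ φ _ _ _ _ _ _ _ _ hg hT hE ihT ihE =>
    have hφ := AExp.evalIn_eq_evalIn_of_compT hg hρ
    have hmk := Set.Iio_subset_Iio hE.le
    obtain ⟨hTt, hTγ⟩ := ihT hρ
    obtain ⟨hEt, hEγ⟩ := ihE hρ
    refine ⟨fun σ σ' hσ => ?_, fun σ σ' hσ => ?_⟩
    · simp only [TForm.read_band_tor ρ _ hT.shaped hE.shaped, hφ σ σ', hTt.mono hmk hσ, hEt hσ]
    · simp only [Form.evalIn_or, Form.evalIn_and, Form.evalIn_not, hφ σ σ', hTγ.mono hmk hσ,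
        hEγ hσ]
  | letin _ x _ _ _ _ _ _ _ _ _ _ _ _ h₁ h₂ ih₁ ih₂ =>
    obtain ⟨h₁t, h₁γ⟩ := ih₁ hρ
    obtain ⟨ht₂, hγ₂⟩ := h₂.wellScoped
    have hmk := Set.Iio_subset_Iio h₂.le
    have hρ' := fun σ => hρ.update (x := x) (TForm.read_hasTy ρ σ h₁.shaped)
    refine ⟨fun σ σ' hσ => ?_, fun σ σ' hσ => ?_⟩
    · simp only [TForm.read_tsubst ρ _ ht₂ h₁.shaped, h₁t.mono hmk hσ, (ih₂ (hρ' σ')).1 hσ]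
    · simp only [Form.evalIn_and, Form.evalIn_tsubst ρ _ hγ₂ h₁.shaped, h₁t.mono hmk hσ,
        h₁γ.mono hmk hσ, (ih₂ (hρ' σ')).2 hσ]

theorem TComp.dependsOn_indicator (h : TComp Γ e τ n m t γ w) {ρ : String → Val}
    (hρ : EnvHasTy ρ Γ) (v : Val) : DependsOn (t.indicator γ ρ v) (Set.Iio m) := by
  intro σ σ' hσ
  simp only [TForm.indicator, (h.dependsOn hρ).1 hσ, (h.dependsOn hρ).2 hσ]

end Invariants

theorem AExp.substEnv_substEnv (a : AExp) (ρ₁ ρ₂ : String → Option Val) :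
    (a.substEnv ρ₁).substEnv ρ₂ = a.substEnv (fun y => (ρ₁ y).or (ρ₂ y)) := by
  cases a with
  | val v => rfl
  | var x => rcases h : ρ₁ x <;> simp [AExp.substEnv, h]

theorem Exp.substEnv_substEnv (e : Exp) (ρ₁ ρ₂ : String → Option Val) :
    (e.substEnv ρ₁).substEnv ρ₂ = e.substEnv (fun y => (ρ₁ y).or (ρ₂ y)) := by
  induction e generalizing ρ₁ ρ₂ with
  | letin x τ e₁ e₂ ih₁ ih₂ =>
    simp only [Exp.substEnv, ih₁, ih₂, Exp.letin.injEq, true_and]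
    congr 1
    funext y
    split_ifs <;> rfl
  | _ => simp [Exp.substEnv, AExp.substEnv_substEnv, *]

theorem Exp.sem_substEnv_letin (ρ : String → Val) (x : String) (τ₁ : Ty) (e₁ e₂ : Exp)
    (v : Val) :
    ((Exp.letin x τ₁ e₁ e₂).substEnv (fun y => some (ρ y))).sem v
      = ∑ v' ∈ τ₁.vals.toFinset, (e₁.substEnv (fun y => some (ρ y))).sem v'
          * (e₂.substEnv (fun y => some (update ρ x v' y))).sem v := by
  rw [Exp.substEnv, Exp.sem, List.sum_toFinset _ τ₁.nodup_vals]
  refine congrArg List.sum (List.map_congr_left fun v' _ => ?_)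
  rw [Exp.substEnv_substEnv]
  congr 3
  funext y
  by_cases hy : y = x <;> simp [hy]

/-- The assignment `σ₀` of the flip variables outside the block `[n, m)` is arbitrary, so that the
induction hypotheses apply inside the sums over earlier blocks. -/
theorem TComp.sem_eq_weightedSum {Γ : String → Option Ty} {e : Exp} {τ : Ty} {n m : ℕ}
    {t : TForm} {γ : Form} {w : ℕ → Bool → ℝ} (h : TComp Γ e τ n m t γ w)
    {ρ : String → Val} (hρ : EnvHasTy ρ Γ) (v : Val) (σ₀ : ℕ → Bool) :
    (e.substEnv (fun x => some (ρ x))).sem v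
      = weightedSum w (List.Ico n m) σ₀ (t.indicator γ ρ v) := by
  induction h generalizing ρ v σ₀ with
  | atom _ _ _ _ _ _ hc =>
    simp [Exp.substEnv, AExp.substEnv_some, Exp.sem, weightedSum, TForm.indicator,
      AExp.read_of_compT hc hρ, eq_comm]
  | fst _ a _ _ t₁ t₂ _ _ hc | snd _ a _ _ t₁ t₂ _ _ hc =>
    have hval : a.valIn ρ = .pair (t₁.read ρ σ₀) (t₂.read ρ σ₀) :=
      (AExp.read_of_compT hc hρ σ₀).symm
    simp [Exp.substEnv, AExp.substEnv_some, hval, Exp.sem, weightedSum, TForm.indicator, eq_comm]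
  | pair _ _ _ _ _ _ _ _ _ h₁ h₂ =>
    simp [Exp.substEnv, AExp.substEnv_some, Exp.sem, weightedSum, TForm.indicator, TForm.read,
      ← AExp.read_of_compT h₁ hρ σ₀, ← AExp.read_of_compT h₂ hρ σ₀, eq_comm]
  | flip _ θ n _ _ _ hwt hwf =>
    rw [List.Ico.succ_singleton]
    rcases v with c | _
    · cases c <;> simp [Exp.substEnv, Exp.sem, weightedSum, TForm.indicator, TForm.read, hwt, hwf]
    · simp [Exp.substEnv, Exp.sem, weightedSum, TForm.indicator, TForm.read]
  | obs _ a φ _ _ hc =>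
    have hval : a.valIn ρ = .bool (φ.evalIn ρ σ₀) := (AExp.read_of_compT hc hρ σ₀).symm
    cases hφ : φ.evalIn ρ σ₀ <;>
      simp [Exp.substEnv, AExp.substEnv_some, hval, hφ, Exp.sem, weightedSum, TForm.indicator,
        TForm.read, eq_comm]
  | ite _ a _ _ _ φ tT tE γT γE n m k w hg hT hE ihT ihE =>
    have hval : a.valIn ρ = .bool (φ.evalIn ρ σ₀) := (AExp.read_of_compT hg hρ σ₀).symm
    rw [Exp.substEnv, AExp.substEnv_some, hval, TForm.indicator_ite ρ v hT.shaped hE.shaped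
      fun σ => AExp.evalIn_eq_evalIn_of_compT hg hρ σ σ₀]
    cases φ.evalIn ρ σ₀
    · have := weightedSum_Ico_mul w hT.le hE.le ((dependsOn_const (1 : ℝ)).mono
        (Set.empty_subset _)) (fun σ => (ihE hρ v σ).symm) σ₀
      simpa [Exp.sem, weightedSum_const w hT.weights_sum_one] using this.symm
    · have := weightedSum_Ico_mul w hT.le hE.le (hT.dependsOn_indicator hρ v)
        (fun σ => weightedSum_const w hE.weights_sum_one σ 1) σ₀
      simpa [Exp.sem, ihT hρ v σ₀] using this.symm
  | letin _ x τ₁ _ _ _ t₁ t₂ γ₁ γ₂ n m k w h₁ h₂ ih₁ ih₂ =>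
    obtain ⟨ht₂, hγ₂⟩ := h₂.wellScoped
    have hind : (t₂.tsubst x t₁).indicator (γ₁.and (γ₂.tsubst x t₁)) ρ v
        = fun σ => ∑ v' ∈ τ₁.vals.toFinset,
            t₁.indicator γ₁ ρ v' σ * t₂.indicator γ₂ (update ρ x v') v σ :=
      funext fun σ => TForm.indicator_tsubst ρ v σ h₁.shaped ht₂ hγ₂
    rw [Exp.sem_substEnv_letin, hind, weightedSum_sum]
    refine Finset.sum_congr rfl fun v' hv' => ?_
    have hρ' := hρ.update (x := x) (Ty.mem_vals.1 (List.mem_toFinset.1 hv'))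
    rw [ih₁ hρ v' σ₀, weightedSum_Ico_mul w h₁.le h₂.le (h₁.dependsOn_indicator hρ v')
      (fun σ => (ih₂ hρ' v σ).symm)]

/-- **Typed Correctness Without Functions.**  If a Dice expression `e`
(Booleans and tuples, no function calls) compiles as
`{xi : τi} ⊢ e : τ ⤳ (φ̂, γ, w)`, then for any well-typed values `vi : τi`
(given by the environment `ρ`) and any value `v : τ`, the unnormalized
semantics satisfies
`⟦e[xi ↦ vi]⟧(v) = WMC(((φ̂ ⇔τ v) ∧ γ)[xi ↦τi vi], w)`. -/
theorem typed_correctness_without_functions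
    (Γ : String → Option Ty) (e : Exp) (τ : Ty) (n : ℕ)
    (t : TForm) (γ : Form) (w : ℕ → Bool → ℝ)
    (h : TComp Γ e τ 0 n t γ w)
    (ρ : String → Val) (hρ : ∀ x τ', Γ x = some τ' → (ρ x).hasTy τ')
    (v : Val) (hv : v.hasTy τ) :
    (e.substEnv (fun x => some (ρ x))).sem v
      = WMC n (((t.tiff v.toForm).and γ).substProg ρ) w := by
  have hind : t.indicator γ ρ v = fun σ => if ((t.tiff v.toForm).and γ).evalIn ρ σ then 1 else 0 :=
    funext fun σ => TForm.indicator_eq ρ v σ h.shaped hv γ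
  rw [h.sem_eq_weightedSum hρ v (fun _ => false), hind, ← sum_fin_eq_weightedSum, WMC]
  simp only [mul_boole]
  rfl
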